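/- arXiv:1401.0616 — 3 statements merged into one kernel-verified Lean document; each statement's English description precedes it below -/
import Mathlib

section
/- Let 0 = x₀ < ⋯ < x_N = L be a partition of [0,L] and p ≥ 1. Let u be a continuous function on [0,L] agreeing with a polynomial of degree at most p on each element, and let g be a function agreeing with a polynomial of degree at most p−1 on the interior of each element. If ∫₀ᴸ φ(x)(g(x) + u'(x)) dx = 0 for every function φ that agrees with a polynomial of degree at most p−1 on the interior of each element, then g(x) + u'(x) = 0 for almost every x ∈ [0,L]. That is, for the compatible pair (CG(p), DG(p−1)), the Galerkin projection of the continuity equation h_t + u_x = 0 is trivial: it holds exactly, not just weakly. -/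
open MeasureTheory

/-- for the compatible pair `(CG(p), DG(p-1))` the Galerkin projection
of the continuity equation is trivial: if `u ∈ CG(p)`, `g ∈ DG(p-1)` and
`∫₀ᴸ φ (g + u') dx = 0` for all `φ ∈ DG(p-1)`, then `g + u' = 0` almost everywhere
on `[0,L]`. -/
theorem continuity_projection_trivial
    (L : ℝ) (hL : 0 < L) (N : ℕ) (hN : 0 < N)
    (x : Fin (N + 1) → ℝ) (hmono : StrictMono x)
    (hx0 : x 0 = 0) (hxN : x (Fin.last N) = L)
    (p : ℕ) (hp : 1 ≤ p)
    (u g : ℝ → ℝ)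
    (hu : ContinuousOn u (Set.Icc 0 L))
    (hupoly : ∀ i : Fin N, ∃ P : Polynomial ℝ, P.natDegree ≤ p ∧
      ∀ t ∈ Set.Icc (x i.castSucc) (x i.succ), u t = P.eval t)
    (hgpoly : ∀ i : Fin N, ∃ Q : Polynomial ℝ, Q.natDegree ≤ p - 1 ∧
      ∀ t ∈ Set.Ioo (x i.castSucc) (x i.succ), g t = Q.eval t)
    (horth : ∀ φ : ℝ → ℝ,
      (∀ i : Fin N, ∃ R : Polynomial ℝ, R.natDegree ≤ p - 1 ∧
        ∀ t ∈ Set.Ioo (x i.castSucc) (x i.succ), φ t = R.eval t) →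
      ∫ t in (0 : ℝ)..L, φ t * (g t + deriv u t) = 0) :
    ∀ᵐ t ∂(volume.restrict (Set.Ioc (0 : ℝ) L)), g t + deriv u t = 0 := by
  classical
  set h : ℝ → ℝ := fun t => g t + deriv u t with hhdef
  -- h agrees with a polynomial of degree ≤ p-1 on each element interior
  have hS : ∀ i : Fin N, ∃ S : Polynomial ℝ, S.natDegree ≤ p - 1 ∧
      ∀ t ∈ Set.Ioo (x i.castSucc) (x i.succ), h t = S.eval t := by
    intro i
    obtain ⟨P, hPdeg, hP⟩ := hupoly i
    obtain ⟨Q, hQdeg, hQ⟩ := hgpoly i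
    refine ⟨Q + P.derivative, ?_, ?_⟩
    · refine (Polynomial.natDegree_add_le _ _).trans (max_le hQdeg ?_)
      exact (Polynomial.natDegree_derivative_le P).trans (Nat.sub_le_sub_right hPdeg 1)
    · intro t ht
      have hderiv : deriv u t = P.derivative.eval t := by
        have hev : u =ᶠ[nhds t] fun s => P.eval s :=
          Filter.eventuallyEq_of_mem (isOpen_Ioo.mem_nhds ht)
            (fun s hs => hP s (Set.Ioo_subset_Icc_self hs))
        rw [hev.deriv_eq, Polynomial.deriv]
      simp [hhdef, hQ t ht, hderiv]
  -- each element interior sits inside (0, L]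
  have hsub : ∀ i : Fin N, Set.Ioo (x i.castSucc) (x i.succ) ⊆ Set.Ioc 0 L := by
    intro i t ht
    constructor
    · calc (0:ℝ) = x 0 := hx0.symm
        _ ≤ x i.castSucc := hmono.monotone (Fin.zero_le _)
        _ < t := ht.1
    · exact le_of_lt (lt_of_lt_of_le ht.2 (by rw [← hxN]; exact hmono.monotone (Fin.le_last _)))
  -- a.e. vanishing on each element interior
  have key : ∀ i : Fin N, ∀ᵐ t : ℝ, t ∈ Set.Ioo (x i.castSucc) (x i.succ) → h t = 0 := by
    intro i
    obtain ⟨S, hSdeg, hSval⟩ := hS i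
    set a := x i.castSucc with ha
    set b := x i.succ with hb
    set φ : ℝ → ℝ := Set.indicator (Set.Ioo a b) h with hφ
    have hφpoly : ∀ j : Fin N, ∃ R : Polynomial ℝ, R.natDegree ≤ p - 1 ∧
        ∀ t ∈ Set.Ioo (x j.castSucc) (x j.succ), φ t = R.eval t := by
      intro j
      by_cases hji : j = i
      · subst hji
        exact ⟨S, hSdeg, fun t ht => by rw [hφ, Set.indicator_of_mem ht, hSval t ht]⟩
      · refine ⟨0, by simp, fun t ht => ?_⟩
        rw [hφ, Set.indicator_of_notMem, Polynomial.eval_zero]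
        intro htmem
        rcases (Ne.lt_or_gt hji) with hlt | hlt
        · have hle : x j.succ ≤ x i.castSucc := by
            apply hmono.monotone
            have h1 : (j : ℕ) < (i : ℕ) := hlt
            simp only [Fin.le_def, Fin.val_succ, Fin.coe_castSucc]
            omega
          have := ht.2
          have := htmem.1
          rw [← ha] at hle
          linarith
        · have hle : x i.succ ≤ x j.castSucc := by
            apply hmono.monotone
            have h1 : (i : ℕ) < (j : ℕ) := hlt
            simp only [Fin.le_def, Fin.val_succ, Fin.coe_castSucc]
            omega
          have := ht.1
          have := htmem.2
          rw [← hb] at hle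
          linarith
    have h0 := horth φ hφpoly
    have heq : (fun t => φ t * (g t + deriv u t)) =
        Set.indicator (Set.Ioo a b) (fun t => (S.eval t) ^ 2) := by
      funext t
      by_cases ht : t ∈ Set.Ioo a b
      · rw [Set.indicator_of_mem ht, hφ, Set.indicator_of_mem ht, hSval t ht]
        have h2 : g t + deriv u t = S.eval t := hSval t ht
        rw [h2]; ring
      · rw [Set.indicator_of_notMem ht, hφ, Set.indicator_of_notMem ht, zero_mul]
    rw [intervalIntegral.integral_of_le hL.le] at h0
    rw [show (fun t => φ t * (g t + deriv u t)) =
        Set.indicator (Set.Ioo a b) (fun t => (S.eval t) ^ 2) from heq] at h0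
    rw [setIntegral_indicator measurableSet_Ioo,
      Set.inter_eq_self_of_subset_right (hsub i)] at h0
    have hint : IntegrableOn (fun t => (S.eval t) ^ 2) (Set.Ioo a b) := by
      have hc : Continuous fun t : ℝ => (S.eval t) ^ 2 := (Polynomial.continuous S).pow 2
      exact (hc.integrableOn_Icc (a := a) (b := b)).mono_set Set.Ioo_subset_Icc_self
    have hzero : (fun t => (S.eval t) ^ 2) =ᵐ[volume.restrict (Set.Ioo a b)] 0 :=
      (integral_eq_zero_iff_of_nonneg (fun t => sq_nonneg _) hint).mp h0
    have hz2 : ∀ᵐ t ∂(volume.restrict (Set.Ioo a b)), S.eval t = 0 := by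
      filter_upwards [hzero] with t ht
      simpa using (pow_eq_zero_iff two_ne_zero).mp (by simpa using ht)
    rw [ae_restrict_iff' measurableSet_Ioo] at hz2
    filter_upwards [hz2] with t ht htmem
    rw [hSval t htmem]
    exact ht htmem
  -- coverage: a non-node point of (0,L] lies in some element interior
  have hcover : ∀ t ∈ Set.Ioc (0:ℝ) L, t ∉ Set.range x →
      ∃ i : Fin N, t ∈ Set.Ioo (x i.castSucc) (x i.succ) := by
    intro t ht hnot
    have h0t : (0:ℝ) < t := ht.1
    have htL : t < L := lt_of_le_of_ne ht.2 (fun e => hnot ⟨Fin.last N, by rw [hxN, e]⟩)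
    set Sset := Finset.univ.filter (fun j : Fin (N+1) => x j < t) with hSset
    have hne : Sset.Nonempty := ⟨0, by simp [hSset, hx0, h0t]⟩
    set i := Sset.max' hne with hi
    have hxi : x i < t := by
      have := Sset.max'_mem hne
      simpa [hSset] using this
    have hiN : (i : ℕ) < N := by
      by_contra hcon
      have hval : (i : ℕ) = N := Nat.le_antisymm (Nat.lt_succ_iff.mp i.isLt) (not_lt.mp hcon)
      have : i = Fin.last N := Fin.ext hval
      rw [this, hxN] at hxi; linarith
    refine ⟨⟨(i : ℕ), hiN⟩, ?_, ?_⟩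
    · have : (Fin.castSucc ⟨(i : ℕ), hiN⟩) = i := Fin.ext rfl
      rw [this]; exact hxi
    · by_contra hcon
      push_neg at hcon
      have hlt : x (Fin.succ ⟨(i : ℕ), hiN⟩) < t :=
        lt_of_le_of_ne hcon (fun e => hnot ⟨_, e⟩)
      have hmem : (Fin.succ ⟨(i : ℕ), hiN⟩) ∈ Sset := by
        simp only [hSset, Finset.mem_filter, Finset.mem_univ, true_and]
        exact hlt
      have hle := Sset.le_max' _ hmem
      rw [← hi] at hle
      have : ((i : ℕ) + 1) ≤ (i : ℕ) := by simpa [Fin.le_def] using hle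
      omega
  have hall : ∀ᵐ t : ℝ, ∀ i : Fin N, t ∈ Set.Ioo (x i.castSucc) (x i.succ) → h t = 0 :=
    ae_all_iff.mpr key
  have hrange : ∀ᵐ t : ℝ, t ∉ Set.range x := by
    have hz : volume (Set.range x) = 0 := (Set.finite_range x).measure_zero _
    exact measure_eq_zero_iff_ae_notMem.mp hz
  rw [ae_restrict_iff' measurableSet_Ioc]
  filter_upwards [hall, hrange] with t h1 h2 ht
  obtain ⟨i, hi⟩ := hcover t ht h2
  exact h1 i hi
end

section
/- Let Ω = [0,L₁]×[0,L₂] with periodic boundary conditions and let V₀, V₂ be sets of smooth Ω-periodic scalar functions and V₁ a set of smooth Ω-periodic vector fields such that ∇⊥ψ ∈ V₁ for all ψ ∈ V₀ and ∇·w ∈ V₂ for all w ∈ V₁. Let f, g be real constants, let ψ ∈ V₀, set u = ∇⊥ψ, and let h ∈ V₂ satisfy the projection condition ∫_Ω φ g h dx = ∫_Ω φ f ψ dx for all φ ∈ V₂. Then for every w ∈ V₁: −∫_Ω f w·u⊥ dx + ∫_Ω (∇·w) g h dx = 0, and moreover ∇·u = 0. Hence the compatible finite element discretisation of the linear rotating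 shallow water equations possesses exactly steady geostrophic states (u_t = 0 weakly and h_t = 0). -/
open MeasureTheory

/-- Partial derivative in the `x`-direction of a planar scalar field. -/
noncomputable def pdx (f : ℝ × ℝ → ℝ) (p : ℝ × ℝ) : ℝ :=
  fderiv ℝ f p (1, 0)

/-- Partial derivative in the `y`-direction of a planar scalar field. -/
noncomputable def pdy (f : ℝ × ℝ → ℝ) (p : ℝ × ℝ) : ℝ :=
  fderiv ℝ f p (0, 1)

/-- The divergence `∇·w = ∂w₁/∂x + ∂w₂/∂y` of a planar vector field. -/
noncomputable def div2 (w : ℝ × ℝ → ℝ × ℝ) (p : ℝ × ℝ) : ℝ :=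
  fderiv ℝ (fun q => (w q).1) p (1, 0) + fderiv ℝ (fun q => (w q).2) p (0, 1)

/-- The perpendicular gradient `∇⊥ψ = (-ψ_y, ψ_x)`. -/
noncomputable def perpGrad (ψ : ℝ × ℝ → ℝ) : ℝ × ℝ → ℝ × ℝ :=
  fun p => (-(pdy ψ p), pdx ψ p)

/-- Periodicity with periods `L₁` and `L₂` in the two coordinate directions. -/
def Per2 {α : Type*} (L₁ L₂ : ℝ) (f : ℝ × ℝ → α) : Prop :=
  ∀ p : ℝ × ℝ, f (p.1 + L₁, p.2) = f p ∧ f (p.1, p.2 + L₂) = f p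

private lemma cont_pdv {F : ℝ × ℝ → ℝ} (hF : ContDiff ℝ (⊤ : ℕ∞) F) (v : ℝ × ℝ) :
    Continuous (fun p => fderiv ℝ F p v) :=
  ((hF.fderiv_right (m := (⊤ : ℕ∞)) (by simp)).continuous).clm_apply continuous_const

/-- Integral of a divergence of a smooth periodic vector field over a period cell is zero. -/
private lemma per_int_div_zero (L₁ L₂ : ℝ) (hL₁ : 0 < L₁) (hL₂ : 0 < L₂)
    (F G : ℝ × ℝ → ℝ) (hF : ContDiff ℝ (⊤ : ℕ∞) F) (hG : ContDiff ℝ (⊤ : ℕ∞) G)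
    (hFp : Per2 L₁ L₂ F) (hGp : Per2 L₁ L₂ G) :
    ∫ p in Set.Icc (0:ℝ) L₁ ×ˢ Set.Icc (0:ℝ) L₂, (pdx F p + pdy G p) = 0 := by
  have hle : ((0:ℝ), (0:ℝ)) ≤ (L₁, L₂) := ⟨hL₁.le, hL₂.le⟩
  have hFd : Differentiable ℝ F := hF.differentiable (by simp)
  have hGd : Differentiable ℝ G := hG.differentiable (by simp)
  have hi : IntegrableOn (fun p => fderiv ℝ F p (1, 0) + fderiv ℝ G p (0, 1))
      (Set.Icc ((0:ℝ), (0:ℝ)) (L₁, L₂)) :=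
    ((cont_pdv hF _).add (cont_pdv hG _)).continuousOn.integrableOn_compact isCompact_Icc
  have key := MeasureTheory.integral_divergence_prod_Icc_of_hasFDerivAt_off_countable_of_le
    F G (fderiv ℝ F) (fderiv ℝ G) ((0:ℝ), (0:ℝ)) (L₁, L₂) hle ∅ Set.countable_empty
    hF.continuous.continuousOn hG.continuous.continuousOn
    (fun x _ => (hFd x).hasFDerivAt) (fun x _ => (hGd x).hasFDerivAt) hi
  have hG0 : ∀ x : ℝ, G (x, L₂) = G (x, 0) := fun x => by
    have := (hGp (x, 0)).2; simpa using this
  have hF0 : ∀ y : ℝ, F (L₁, y) = F (0, y) := fun y => by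
    have := (hFp (0, y)).1; simpa using this
  rw [Set.Icc_prod_Icc]
  show (∫ p in Set.Icc ((0:ℝ), (0:ℝ)) (L₁, L₂), (fderiv ℝ F p (1, 0) + fderiv ℝ G p (0, 1))) = 0
  rw [key]
  simp only [hG0, hF0]
  ring

/-- compatible finite element discretisations of the linear rotating
shallow water equations possess exactly steady geostrophic states.  If `∇⊥V₀ ⊆ V₁`,
`∇·V₁ ⊆ V₂`, `ψ ∈ V₀`, `u = ∇⊥ψ`, and `h ∈ V₂` is defined by the projection
`∫ φ g h = ∫ φ f ψ` for all `φ ∈ V₂`, then `-∫ f w·u⊥ + ∫ (∇·w) g h = 0` for every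
`w ∈ V₁` (so `u_t = 0` weakly) and `∇·u = 0` (so `h_t = 0`). -/
theorem discrete_geostrophic_balance_steady
    (L₁ L₂ : ℝ) (hL₁ : 0 < L₁) (hL₂ : 0 < L₂)
    (Ω : Set (ℝ × ℝ)) (hΩ : Ω = Set.Icc (0 : ℝ) L₁ ×ˢ Set.Icc (0 : ℝ) L₂)
    (V₀ : Set (ℝ × ℝ → ℝ)) (V₁ : Set (ℝ × ℝ → ℝ × ℝ)) (V₂ : Set (ℝ × ℝ → ℝ))
    (hV₀ : ∀ ψ ∈ V₀, ContDiff ℝ (⊤ : ℕ∞) ψ ∧ Per2 L₁ L₂ ψ)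
    (hV₁ : ∀ w ∈ V₁, ContDiff ℝ (⊤ : ℕ∞) w ∧ Per2 L₁ L₂ w)
    (hV₂ : ∀ φ ∈ V₂, ContDiff ℝ (⊤ : ℕ∞) φ ∧ Per2 L₁ L₂ φ)
    (hgradperp : ∀ ψ ∈ V₀, perpGrad ψ ∈ V₁)
    (hdiv : ∀ w ∈ V₁, div2 w ∈ V₂)
    (f g : ℝ)
    (ψ : ℝ × ℝ → ℝ) (hψ : ψ ∈ V₀)
    (u : ℝ × ℝ → ℝ × ℝ) (hu : ∀ p, u p = perpGrad ψ p)
    (h : ℝ × ℝ → ℝ) (hh : h ∈ V₂)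
    (hproj : ∀ φ ∈ V₂, ∫ p in Ω, φ p * (g * h p) = ∫ p in Ω, φ p * (f * ψ p)) :
    (∀ w ∈ V₁,
      -(∫ p in Ω, f * ((w p).1 * (-(u p).2) + (w p).2 * (u p).1)) +
        (∫ p in Ω, div2 w p * (g * h p)) = 0) ∧
    (∀ p : ℝ × ℝ, div2 u p = 0) := by
  obtain ⟨ψc, ψp⟩ := hV₀ ψ hψ
  have hψd : Differentiable ℝ ψ := ψc.differentiable (by simp)
  have hψ'c : ContDiff ℝ (⊤ : ℕ∞) (fderiv ℝ ψ) := ψc.fderiv_right (m := (⊤ : ℕ∞)) (by simp)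
  have hψ'd : Differentiable ℝ (fderiv ℝ ψ) := hψ'c.differentiable (by simp)
  constructor
  · intro w hw
    obtain ⟨wc, wp⟩ := hV₁ w hw
    have hw1c : ContDiff ℝ (⊤ : ℕ∞) (fun q => (w q).1) := contDiff_fst.comp wc
    have hw2c : ContDiff ℝ (⊤ : ℕ∞) (fun q => (w q).2) := contDiff_snd.comp wc
    -- use the projection with test function div2 w
    rw [hproj (div2 w) (hdiv w hw), hΩ]
    set S := Set.Icc (0:ℝ) L₁ ×ˢ Set.Icc (0:ℝ) L₂ with hS
    -- rewrite the first integrand using u = ∇⊥ψ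
    have e1 : (fun p => f * ((w p).1 * (-(u p).2) + (w p).2 * (u p).1)) =
        fun p => -(f * ((w p).1 * pdx ψ p + (w p).2 * pdy ψ p)) := by
      funext p; rw [hu p]; simp only [perpGrad]; ring
    rw [e1, integral_neg, neg_neg]
    -- integrability of both pieces
    have hcont1 : Continuous fun p => f * ((w p).1 * pdx ψ p + (w p).2 * pdy ψ p) := by
      unfold pdx pdy
      exact continuous_const.mul (((hw1c.continuous).mul (cont_pdv ψc _)).add
        ((hw2c.continuous).mul (cont_pdv ψc _)))
    have hcont2 : Continuous fun p => div2 w p * (f * ψ p) := by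
      unfold div2
      exact ((cont_pdv hw1c _).add (cont_pdv hw2c _)).mul (continuous_const.mul ψc.continuous)
    have hcS : IsCompact S := (isCompact_Icc.prod isCompact_Icc)
    rw [← integral_add (hcont1.continuousOn.integrableOn_compact hcS)
      (hcont2.continuousOn.integrableOn_compact hcS)]
    -- identify the integrand with a divergence
    have key : ∀ p, f * ((w p).1 * pdx ψ p + (w p).2 * pdy ψ p) + div2 w p * (f * ψ p) =
        pdx (fun q => f * ψ q * (w q).1) p + pdy (fun q => f * ψ q * (w q).2) p := by
      intro p
      have h1 : DifferentiableAt ℝ ψ p := hψd p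
      have hfψ : DifferentiableAt ℝ (fun q => f * ψ q) p := (h1.const_mul f)
      have hw1 : DifferentiableAt ℝ (fun q => (w q).1) p := hw1c.differentiable (by simp) p
      have hw2 : DifferentiableAt ℝ (fun q => (w q).2) p := hw2c.differentiable (by simp) p
      unfold pdx pdy div2
      rw [fderiv_fun_mul hfψ hw1, fderiv_fun_mul hfψ hw2, fderiv_const_mul h1 f]
      simp only [ContinuousLinearMap.add_apply, ContinuousLinearMap.smul_apply, smul_eq_mul]
      ring
    rw [show (fun p => f * ((w p).1 * pdx ψ p + (w p).2 * pdy ψ p) + div2 w p * (f * ψ p)) =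
        fun p => pdx (fun q => f * ψ q * (w q).1) p + pdy (fun q => f * ψ q * (w q).2) p from
      funext key]
    exact per_int_div_zero L₁ L₂ hL₁ hL₂ _ _
      ((contDiff_const.mul ψc).mul hw1c) ((contDiff_const.mul ψc).mul hw2c)
      (fun p => ⟨by rw [(ψp p).1, (wp p).1], by rw [(ψp p).2, (wp p).2]⟩)
      (fun p => ⟨by rw [(ψp p).1, (wp p).1], by rw [(ψp p).2, (wp p).2]⟩)
  · intro p
    have symm := second_derivative_symmetric (f := ψ) (f' := fderiv ℝ ψ)
      (f'' := fderiv ℝ (fderiv ℝ ψ) p) (fun y => (hψd y).hasFDerivAt) ((hψ'd p).hasFDerivAt)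
    have hu1 : (fun q => (u q).1) = fun q => -(fderiv ℝ ψ q (0, 1)) := by
      funext q; rw [hu q]; rfl
    have hu2 : (fun q => (u q).2) = fun q => fderiv ℝ ψ q (1, 0) := by
      funext q; rw [hu q]; rfl
    have hclm : ∀ (v : ℝ × ℝ), fderiv ℝ (fun q => fderiv ℝ ψ q v) p =
        (fderiv ℝ (fderiv ℝ ψ) p).flip v := by
      intro v
      rw [show (fun q => fderiv ℝ ψ q v) = fun q => (fderiv ℝ ψ q) ((fun _ => v) q) from rfl,
        fderiv_clm_apply (hψ'd p) (differentiableAt_const v)]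
      simp
    unfold div2
    rw [hu1, hu2, fderiv_fun_neg, hclm (0, 1), hclm (1, 0)]
    simp only [ContinuousLinearMap.neg_apply, ContinuousLinearMap.flip_apply]
    rw [symm (1, 0) (0, 1)]
    ring
end

section
/- Let Ω = [0,L₁]×[0,L₂] with periodic boundary conditions, let V₁ be a real vector subspace of smooth Ω-periodic vector fields and V₂ a real vector subspace of smooth Ω-periodic scalar functions with ∇·w ∈ V₂ for all w ∈ V₁. Let g be a constant and suppose u(t), F(t) ∈ V₁ and h(t) ∈ V₂ depend smoothly on t with u_t(t) ∈ V₁ and h_t(t) ∈ V₂, and for all t: (i) ∫_Ω w·u_t dx + ∫_Ω q w·F⊥ dx − ∫_Ω (∇·w)(gh + ½|u|²) dx = 0 for all w ∈ V₁ (for some smooth q); (ii) ∫_Ω φ (h_t + ∇·F) dx = 0 for all φ ∈ V₂; (iii) ∫_Ω w·F dx = ∫_Ω w·(h u) dx for all w ∈ V₁. Then the energy E(t) = ∫_Ω (h/2)(|u|² + g h) dx is conserved: dE/dt = 0. -/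
open MeasureTheory

lemma hasDerivAt_slice {E : Type*} [NormedAddCommGroup E] [NormedSpace ℝ E]
    {f : ℝ × (ℝ × ℝ) → E} (hf : ContDiff ℝ (⊤ : ℕ∞) f) (t : ℝ) (p : ℝ × ℝ) :
    HasDerivAt (fun s => f (s, p)) (fderiv ℝ f (t, p) (1, 0)) t := by
  have h1 : HasFDerivAt f (fderiv ℝ f (t, p)) (t, p) :=
    (hf.differentiable (by simp) (t, p)).hasFDerivAt
  have h2 : HasDerivAt (fun s : ℝ => (s, p)) ((1 : ℝ), (0 : ℝ × ℝ)) t :=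
    (hasDerivAt_id t).prodMk (hasDerivAt_const t p)
  exact h1.comp_hasDerivAt t h2

lemma continuous_slice_deriv {E : Type*} [NormedAddCommGroup E] [NormedSpace ℝ E]
    {f : ℝ × (ℝ × ℝ) → E} (hf : ContDiff ℝ (⊤ : ℕ∞) f) :
    Continuous (fun z => fderiv ℝ f z ((1 : ℝ), (0 : ℝ × ℝ)))  :=
  (hf.continuous_fderiv (by simp)).clm_apply continuous_const

lemma zero_on_box {L₁ L₂ : ℝ} (hL₁ : 0 < L₁) (hL₂ : 0 < L₂)
    {Ω : Set (ℝ × ℝ)} (hΩ : Ω = Set.Icc (0 : ℝ) L₁ ×ˢ Set.Icc (0 : ℝ) L₂)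
    {f : ℝ × ℝ → ℝ} (hf : Continuous f)
    (h0 : ∫ p in Ω, f p * f p = 0) : ∀ p ∈ Ω, f p = 0 := by
  have hKc : IsCompact Ω := by rw [hΩ]; exact isCompact_Icc.prod isCompact_Icc
  have hint : IntegrableOn (fun p => f p * f p) Ω :=
    ((hf.mul hf).continuousOn).integrableOn_compact hKc
  have hae : (fun p => f p * f p) =ᵐ[volume.restrict Ω] 0 :=
    (integral_eq_zero_iff_of_nonneg (fun p => mul_self_nonneg (f p)) hint).1 h0
  intro p hp
  by_contra hne
  set S : Set (ℝ × ℝ) := {x | f x ≠ 0} with hS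
  have hSopen : IsOpen S := isOpen_compl_singleton.preimage hf
  have hnull : volume (S ∩ Ω) = 0 := by
    have h2 : (volume.restrict Ω) {a | ¬ (f a * f a = 0)} = 0 := by
      have := hae
      rw [Filter.EventuallyEq, Filter.eventually_iff, mem_ae_iff] at this
      simp at this ⊢; exact this
    have hset : {a | ¬ (f a * f a = 0)} = S := by
      ext x; simp [hS, mul_self_eq_zero]
    rw [hset, Measure.restrict_apply hSopen.measurableSet] at h2
    exact h2
  have hcl : p ∈ closure (Set.Ioo (0:ℝ) L₁ ×ˢ Set.Ioo (0:ℝ) L₂) := by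
    rw [closure_prod_eq, closure_Ioo hL₁.ne, closure_Ioo hL₂.ne]
    rw [hΩ] at hp; exact hp
  obtain ⟨x, hx⟩ := mem_closure_iff.1 hcl S hSopen hne
  have hpos : 0 < volume (S ∩ Set.Ioo (0:ℝ) L₁ ×ˢ Set.Ioo (0:ℝ) L₂) :=
    (hSopen.inter (isOpen_Ioo.prod isOpen_Ioo)).measure_pos volume ⟨x, hx⟩
  have hsub : S ∩ Set.Ioo (0:ℝ) L₁ ×ˢ Set.Ioo (0:ℝ) L₂ ⊆ S ∩ Ω := by
    apply Set.inter_subset_inter_right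
    rw [hΩ]; exact Set.prod_mono Set.Ioo_subset_Icc_self Set.Ioo_subset_Icc_self
  exact absurd hnull (hpos.trans_le (measure_mono hsub)).ne'

/-- energy conservation for the compatible finite element
discretisation of the nonlinear shallow water equations.  With `∇·V₁ ⊆ V₂`,
`u(t), F(t), u_t(t) ∈ V₁`, `h(t), h_t(t) ∈ V₂`, and for all `t`:
(i) the discrete momentum equation
`∫_Ω w·u_t + ∫_Ω q w·F⊥ - ∫_Ω (∇·w)(gh + ½|u|²) = 0` for all `w ∈ V₁`;
(ii) the discrete continuity equation `∫_Ω φ (h_t + ∇·F) = 0` for all `φ ∈ V₂`;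
(iii) `F` is the `L²` projection of `hu` into `V₁`:
`∫_Ω w·F = ∫_Ω w·(hu)` for all `w ∈ V₁`;
then the energy `E(t) = ∫_Ω (h/2)(|u|² + gh) dx` is conserved: `dE/dt = 0`. -/
theorem discrete_energy_conservation
    (L₁ L₂ : ℝ) (hL₁ : 0 < L₁) (hL₂ : 0 < L₂)
    (Ω : Set (ℝ × ℝ)) (hΩ : Ω = Set.Icc (0 : ℝ) L₁ ×ˢ Set.Icc (0 : ℝ) L₂)
    (V₁ : Submodule ℝ ((ℝ × ℝ) → ℝ × ℝ)) (V₂ : Submodule ℝ ((ℝ × ℝ) → ℝ))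
    (hV₁ : ∀ w ∈ V₁, ContDiff ℝ (⊤ : ℕ∞) w ∧ Per2 L₁ L₂ w)
    (hV₂ : ∀ φ ∈ V₂, ContDiff ℝ (⊤ : ℕ∞) φ ∧ Per2 L₁ L₂ φ)
    (hdiv : ∀ w ∈ V₁, div2 w ∈ V₂)
    (g : ℝ)
    (u F : ℝ → ℝ × ℝ → ℝ × ℝ) (h q : ℝ → ℝ × ℝ → ℝ)
    (hus : ContDiff ℝ (⊤ : ℕ∞) (fun z : ℝ × (ℝ × ℝ) => u z.1 z.2))
    (hFs : ContDiff ℝ (⊤ : ℕ∞) (fun z : ℝ × (ℝ × ℝ) => F z.1 z.2))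
    (hhs : ContDiff ℝ (⊤ : ℕ∞) (fun z : ℝ × (ℝ × ℝ) => h z.1 z.2))
    (hqs : ContDiff ℝ (⊤ : ℕ∞) (fun z : ℝ × (ℝ × ℝ) => q z.1 z.2))
    (huV : ∀ t, u t ∈ V₁) (hFV : ∀ t, F t ∈ V₁) (hhV : ∀ t, h t ∈ V₂)
    (hutV : ∀ t, (fun p => deriv (fun s => u s p) t) ∈ V₁)
    (hhtV : ∀ t, (fun p => deriv (fun s => h s p) t) ∈ V₂)
    (hmom : ∀ t : ℝ, ∀ w ∈ V₁,
      (∫ p in Ω, ((w p).1 * (deriv (fun s => (u s p).1) t) +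
          (w p).2 * (deriv (fun s => (u s p).2) t))) +
        (∫ p in Ω, q t p * ((w p).1 * (-(F t p).2) + (w p).2 * (F t p).1)) -
        (∫ p in Ω, div2 w p *
          (g * h t p + ((u t p).1 ^ 2 + (u t p).2 ^ 2) / 2)) = 0)
    (hcont : ∀ t : ℝ, ∀ φ ∈ V₂,
      ∫ p in Ω, φ p * (deriv (fun s => h s p) t + div2 (F t) p) = 0)
    (hproj : ∀ t : ℝ, ∀ w ∈ V₁,
      (∫ p in Ω, ((w p).1 * (F t p).1 + (w p).2 * (F t p).2)) =
        ∫ p in Ω, ((w p).1 * (h t p * (u t p).1) +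
          (w p).2 * (h t p * (u t p).2))) :
    ∀ t : ℝ, deriv (fun s => ∫ p in Ω,
      (h s p / 2) * (((u s p).1 ^ 2 + (u s p).2 ^ 2) + g * h s p)) t = 0 := by
  intro t
  -- component smoothness
  have hU1s : ContDiff ℝ (⊤ : ℕ∞) (fun z : ℝ × (ℝ × ℝ) => (u z.1 z.2).1) := contDiff_fst.comp hus
  have hU2s : ContDiff ℝ (⊤ : ℕ∞) (fun z : ℝ × (ℝ × ℝ) => (u z.1 z.2).2) := contDiff_snd.comp hus
  -- time derivatives as functions of (t, p)
  set hdz : ℝ × (ℝ × ℝ) → ℝ :=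
    fun z => fderiv ℝ (fun z : ℝ × (ℝ × ℝ) => h z.1 z.2) z (1, 0) with hdz_def
  set u1d : ℝ × (ℝ × ℝ) → ℝ :=
    fun z => fderiv ℝ (fun z : ℝ × (ℝ × ℝ) => (u z.1 z.2).1) z (1, 0) with u1d_def
  set u2d : ℝ × (ℝ × ℝ) → ℝ :=
    fun z => fderiv ℝ (fun z : ℝ × (ℝ × ℝ) => (u z.1 z.2).2) z (1, 0) with u2d_def
  have Hh : ∀ (s : ℝ) (p : ℝ × ℝ), HasDerivAt (fun s' => h s' p) (hdz (s, p)) s :=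
    fun s p => hasDerivAt_slice hhs s p
  have HU1 : ∀ (s : ℝ) (p : ℝ × ℝ), HasDerivAt (fun s' => (u s' p).1) (u1d (s, p)) s :=
    fun s p => hasDerivAt_slice hU1s s p
  have HU2 : ∀ (s : ℝ) (p : ℝ × ℝ), HasDerivAt (fun s' => (u s' p).2) (u2d (s, p)) s :=
    fun s p => hasDerivAt_slice hU2s s p
  have dh : ∀ p : ℝ × ℝ, deriv (fun s => h s p) t = hdz (t, p) := fun p => (Hh t p).deriv
  have du1 : ∀ p : ℝ × ℝ, deriv (fun s => (u s p).1) t = u1d (t, p) := fun p => (HU1 t p).deriv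
  have du2 : ∀ p : ℝ × ℝ, deriv (fun s => (u s p).2) t = u2d (t, p) := fun p => (HU2 t p).deriv
  have dvec : ∀ p : ℝ × ℝ, deriv (fun s => u s p) t = (u1d (t, p), u2d (t, p)) := by
    intro p
    have h1 := hasDerivAt_slice hus t p
    have e1 : (fderiv ℝ (fun z : ℝ × (ℝ × ℝ) => u z.1 z.2) (t, p) (1, 0)).1 = u1d (t, p) :=
      HasDerivAt.unique
        ((ContinuousLinearMap.fst ℝ ℝ ℝ).hasFDerivAt.comp_hasDerivAt t h1) (HU1 t p)
    have e2 : (fderiv ℝ (fun z : ℝ × (ℝ × ℝ) => u z.1 z.2) (t, p) (1, 0)).2 = u2d (t, p) :=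
      HasDerivAt.unique
        ((ContinuousLinearMap.snd ℝ ℝ ℝ).hasFDerivAt.comp_hasDerivAt t h1) (HU2 t p)
    rw [h1.deriv]; exact Prod.ext e1 e2
  -- continuity facts
  have chd : Continuous hdz := continuous_slice_deriv hhs
  have cu1d : Continuous u1d := continuous_slice_deriv hU1s
  have cu2d : Continuous u2d := continuous_slice_deriv hU2s
  have cHt : Continuous (h t) := (hV₂ _ (hhV t)).1.continuous
  have cUt : Continuous (u t) := (hV₁ _ (huV t)).1.continuous
  have cFts : ContDiff ℝ (⊤ : ℕ∞) (F t) := (hV₁ _ (hFV t)).1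
  have cFt : Continuous (F t) := cFts.continuous
  have cqt : Continuous (q t) := hqs.continuous.comp (continuous_const.prodMk continuous_id)
  have cdivF : Continuous (div2 (F t)) := by
    have c1 : Continuous fun p : ℝ × ℝ => fderiv ℝ (fun r : ℝ × ℝ => (F t r).1) p (1, 0) :=
      ((contDiff_fst.comp cFts).continuous_fderiv (by simp)).clm_apply continuous_const
    have c2 : Continuous fun p : ℝ × ℝ => fderiv ℝ (fun r : ℝ × ℝ => (F t r).2) p (0, 1) :=
      ((contDiff_snd.comp cFts).continuous_fderiv (by simp)).clm_apply continuous_const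
    exact c1.add c2
  have cht : Continuous fun p : ℝ × ℝ => hdz (t, p) :=
    chd.comp (continuous_const.prodMk continuous_id)
  have cu1t : Continuous fun p : ℝ × ℝ => u1d (t, p) :=
    cu1d.comp (continuous_const.prodMk continuous_id)
  have cu2t : Continuous fun p : ℝ × ℝ => u2d (t, p) :=
    cu2d.comp (continuous_const.prodMk continuous_id)
  have cu1 : Continuous fun p : ℝ × ℝ => (u t p).1 := continuous_fst.comp cUt
  have cu2 : Continuous fun p : ℝ × ℝ => (u t p).2 := continuous_snd.comp cUt
  -- compactness
  have hKc : IsCompact Ω := by rw [hΩ]; exact isCompact_Icc.prod isCompact_Icc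
  have hΩm : MeasurableSet Ω := hKc.measurableSet
  have hfin : volume Ω < ⊤ := hKc.measure_lt_top
  -- the energy density and its time derivative
  have cG : Continuous fun z : ℝ × (ℝ × ℝ) =>
      (h z.1 z.2 / 2) * (((u z.1 z.2).1 ^ 2 + (u z.1 z.2).2 ^ 2) + g * h z.1 z.2) :=
    (hhs.continuous.div_const 2).mul
      (((hU1s.continuous.pow 2).add (hU2s.continuous.pow 2)).add
        (continuous_const.mul hhs.continuous))
  set Gd : ℝ × (ℝ × ℝ) → ℝ := fun z =>
      hdz z / 2 * ((u z.1 z.2).1 ^ 2 + (u z.1 z.2).2 ^ 2 + g * h z.1 z.2) +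
      h z.1 z.2 / 2 *
        (2 * (u z.1 z.2).1 * u1d z + 2 * (u z.1 z.2).2 * u2d z + g * hdz z) with Gd_def
  have cGd : Continuous Gd := by
    refine ((chd.div_const 2).mul (((hU1s.continuous.pow 2).add (hU2s.continuous.pow 2)).add
      (continuous_const.mul hhs.continuous))).add
      ((hhs.continuous.div_const 2).mul ?_)
    exact (((continuous_const.mul hU1s.continuous).mul cu1d).add
      ((continuous_const.mul hU2s.continuous).mul cu2d)).add (continuous_const.mul chd)
  have hGder : ∀ (s : ℝ) (p : ℝ × ℝ), HasDerivAt
      (fun s' => (h s' p / 2) * (((u s' p).1 ^ 2 + (u s' p).2 ^ 2) + g * h s' p))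
      (Gd (s, p)) s := by
    intro s p
    have hh0 := Hh s p
    have h1 := HU1 s p
    have h2 := HU2 s p
    have key := (hh0.div_const 2).mul (((h1.pow 2).add (h2.pow 2)).add (hh0.const_mul g))
    refine key.congr_deriv ?_
    rw [Gd_def]
    push_cast
    simp only [Pi.add_apply, Pi.pow_apply]
    ring
  -- bound on the derivative over a compact tube
  have hΩne : ((0 : ℝ), (0 : ℝ)) ∈ Ω := by
    rw [hΩ]; exact ⟨⟨le_refl 0, hL₁.le⟩, ⟨le_refl 0, hL₂.le⟩⟩
  have hKbc : IsCompact (Metric.closedBall t 1 ×ˢ Ω) := (isCompact_closedBall t 1).prod hKc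
  obtain ⟨z₀, hz₀K, hz₀'⟩ := hKbc.exists_isMaxOn
    ⟨(t, ((0 : ℝ), (0 : ℝ))), Metric.mem_closedBall_self one_pos.le, hΩne⟩
    cGd.norm.continuousOn
  have hz₀ : ∀ y ∈ Metric.closedBall t 1 ×ˢ Ω, ‖Gd y‖ ≤ ‖Gd z₀‖ := isMaxOn_iff.1 hz₀'
  -- differentiation under the integral sign
  have key2 := hasDerivAt_integral_of_dominated_loc_of_deriv_le (𝕜 := ℝ)
    (μ := volume.restrict Ω)
    (F := fun s p => (h s p / 2) * (((u s p).1 ^ 2 + (u s p).2 ^ 2) + g * h s p))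
    (F' := fun s p => Gd (s, p)) (x₀ := t) (s := Metric.ball t 1) (bound := fun _ => ‖Gd z₀‖) (Metric.ball_mem_nhds t one_pos)
    (Filter.Eventually.of_forall fun s =>
      ((cG.comp (continuous_const.prodMk continuous_id)).aestronglyMeasurable :
        AEStronglyMeasurable _ (volume.restrict Ω)))
    ((cG.comp (continuous_const.prodMk continuous_id)).continuousOn.integrableOn_compact hKc)
    ((cGd.comp (continuous_const.prodMk continuous_id)).aestronglyMeasurable)
    ((ae_restrict_iff' hΩm).2 (Filter.Eventually.of_forall fun p hp s hs =>
      hz₀ (s, p) ⟨Metric.ball_subset_closedBall hs, hp⟩))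
    (integrableOn_const hfin.ne)
    (Filter.Eventually.of_forall fun p s _ => hGder s p)
  have keyD : HasDerivAt (fun s => ∫ p in Ω,
      (h s p / 2) * (((u s p).1 ^ 2 + (u s p).2 ^ 2) + g * h s p))
      (∫ p in Ω, Gd (t, p)) t := key2.2
  rw [keyD.deriv]
  -- integrability of the two pieces
  have intX : IntegrableOn (fun p => hdz (t, p) *
      (g * h t p + ((u t p).1 ^ 2 + (u t p).2 ^ 2) / 2)) Ω :=
    ((cht.mul ((continuous_const.mul cHt).add
      (((cu1.pow 2).add (cu2.pow 2)).div_const 2))).continuousOn).integrableOn_compact hKc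
  have intY : IntegrableOn (fun p => h t p *
      ((u t p).1 * u1d (t, p) + (u t p).2 * u2d (t, p))) Ω :=
    ((cHt.mul ((cu1.mul cu1t).add (cu2.mul cu2t))).continuousOn).integrableOn_compact hKc
  -- split the derivative integral
  have split : ∫ p in Ω, Gd (t, p) =
      (∫ p in Ω, hdz (t, p) * (g * h t p + ((u t p).1 ^ 2 + (u t p).2 ^ 2) / 2)) +
      ∫ p in Ω, h t p * ((u t p).1 * u1d (t, p) + (u t p).2 * u2d (t, p)) := by
    rw [← integral_add intX intY]
    refine integral_congr_ae (Filter.Eventually.of_forall fun p => ?_)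
    rw [Gd_def]; ring
  -- pointwise continuity equation:  h_t = -div F  on Ω
  have hψmem : (fun p : ℝ × ℝ => deriv (fun s => h s p) t + div2 (F t) p) ∈ V₂ :=
    V₂.add_mem (hhtV t) (hdiv (F t) (hFV t))
  have hψint := hcont t _ hψmem
  have hψpt : ∀ p ∈ Ω, deriv (fun s => h s p) t + div2 (F t) p = 0 := by
    apply zero_on_box hL₁ hL₂ hΩ ((hV₂ _ hψmem).1.continuous)
    simpa using hψint
  -- momentum equation with w = F t
  have hm := hmom t (F t) (hFV t)
  have hT2 : (∫ p in Ω, q t p * ((F t p).1 * (-(F t p).2) + (F t p).2 * (F t p).1)) = 0 := by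
    have e0 : ∀ p : ℝ × ℝ,
        q t p * ((F t p).1 * (-(F t p).2) + (F t p).2 * (F t p).1) = 0 := fun p => by ring
    simp only [e0, integral_zero]
  rw [hT2] at hm
  simp only [du1, du2] at hm
  have hT3 : (∫ p in Ω, div2 (F t) p * (g * h t p + ((u t p).1 ^ 2 + (u t p).2 ^ 2) / 2)) =
      ∫ p in Ω, -(hdz (t, p) * (g * h t p + ((u t p).1 ^ 2 + (u t p).2 ^ 2) / 2)) := by
    refine setIntegral_congr_fun hΩm fun p hp => ?_
    have h1 := hψpt p hp
    rw [dh p] at h1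
    have hdiv2 : div2 (F t) p = -hdz (t, p) := by linarith
    rw [hdiv2]; ring
  rw [hT3, integral_neg] at hm
  -- projection equation with w = u_t
  have hp2 := hproj t _ (hutV t)
  simp only [dvec] at hp2
  have hY1 : (∫ p in Ω, h t p * ((u t p).1 * u1d (t, p) + (u t p).2 * u2d (t, p))) =
      ∫ p in Ω, ((u1d (t, p), u2d (t, p)).1 * (h t p * (u t p).1) +
        (u1d (t, p), u2d (t, p)).2 * (h t p * (u t p).2)) :=
    setIntegral_congr_fun hΩm fun p _ => by simp; ring
  have hY2 : (∫ p in Ω, ((u1d (t, p), u2d (t, p)).1 * (F t p).1 +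
        (u1d (t, p), u2d (t, p)).2 * (F t p).2)) =
      ∫ p in Ω, ((F t p).1 * u1d (t, p) + (F t p).2 * u2d (t, p)) :=
    setIntegral_congr_fun hΩm fun p _ => by simp; ring
  rw [split, hY1, ← hp2, hY2]
  linarith [hm]
end
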